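/- arXiv:math/0510043 — 2 statements merged into one kernel-verified Lean document; each statement's English description precedes it below -/
import Mathlib

section
/- Let G : [0,∞) → (0,∞) be non-decreasing and let (X_n)_{n≥1} be i.i.d. symmetric real random variables with partial sums S_n. Then Σ_{i≥0} G(2^i)·P[|S_{2^i}| ≥ 2^i/4] ≤ 4·Σ_{n≥1} n^{-1}·G(n)·P[|S_n| ≥ n/8] (both sides possibly infinite). -/
open MeasureTheory ProbabilityTheory ENNReal

/-- Partial sums `S_n = X_1 + ⋯ + X_n` (here `X i` for `i < n`). -/
noncomputable def partialSum {Ω : Type*} (X : ℕ → Ω → ℝ) (n : ℕ) (ω : Ω) : ℝ :=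
  ∑ i ∈ Finset.range n, X i ω

/-- The last deviation time `L_a = sup({0} ∪ {n ≥ 1 : |S_n/n| ≥ a}) ∈ ℕ ∪ {∞}`. -/
noncomputable def lastDev {Ω : Type*} (X : ℕ → Ω → ℝ) (a : ℝ) (ω : Ω) : ℕ∞ :=
  ⨆ n ∈ {n : ℕ | 1 ≤ n ∧ a ≤ |partialSum X n ω / n|}, (n : ℕ∞)

/-- Evaluation of `G` at an extended natural number, with `G(∞) = ∞`. -/
noncomputable def evalG (G : ℝ → ℝ) : ℕ∞ → ℝ≥0∞
  | ⊤ => ⊤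
  | (n : ℕ) => ENNReal.ofReal (G n)

/-- A positive function on `[0,∞)` is moderate if it is non-decreasing, tends to `+∞`,
and `G(2t) ≤ c·G(t)`. -/
def Moderate (G : ℝ → ℝ) : Prop :=
  (∀ t ≥ 0, 0 < G t) ∧ MonotoneOn G (Set.Ici 0) ∧
    Filter.Tendsto G Filter.atTop Filter.atTop ∧
    ∃ c : ℝ, ∀ t ≥ 0, G (2 * t) ≤ c * G t

/-!
Split `n ≥ 1` into the dyadic blocks `2^i ≤ n < 2^(i+1)`. For `n` in block `i`,
`S_n = S_{2^i} + (X_{2^i} + ⋯ + X_{n-1})` with the second summand symmetric and independent of the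
first, so Lévy's symmetrization gives `P[|S_{2^i}| ≥ t] ≤ 2 P[|S_n| ≥ t]`. Taking `t = 2^i/4 ≥ n/8`
and using `n⁻¹ ≥ 2^{-i-1}`, `G(n) ≥ G(2^i)`, each of the `2^i` summands of block `i` on the right is
at least `2^{-i}/4` times the `i`-th summand on the left.
-/

open Finset

section Symmetry

variable {Ω : Type*} [MeasurableSpace Ω] {μ : Measure Ω}

theorem ProbabilityTheory.iIndepFun.indepFun_finsetSum_finsetSum {ι β : Type*}
    [AddCommMonoid β] [MeasurableSpace β] [MeasurableAdd₂ β] {f : ι → Ω → β}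
    (hindep : iIndepFun f μ) (hf : ∀ i, Measurable (f i)) {s t : Finset ι}
    (hst : Disjoint s t) :
    IndepFun (∑ i ∈ s, f i) (∑ i ∈ t, f i) μ := by
  have := (hindep.indepFun_finset s t hst hf).comp
    (univ.measurable_sum fun i _ => measurable_pi_apply i)
    (univ.measurable_sum fun i _ => measurable_pi_apply i)
  convert this using 1 <;> ext ω <;> simp only [Finset.sum_apply, Function.comp_apply] <;>
    exact (sum_coe_sort _ _).symm

theorem ProbabilityTheory.IdentDistrib.add_of_indepFun {Ω' : Type*} [MeasurableSpace Ω']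
    {ν : Measure Ω'} [IsFiniteMeasure μ] {X Y : Ω → ℝ} {Z W : Ω' → ℝ}
    (hXZ : IdentDistrib X Z μ ν) (hYW : IdentDistrib Y W μ ν)
    (hXY : IndepFun X Y μ) (hZW : IndepFun Z W ν) :
    IdentDistrib (X + Y) (Z + W) μ ν :=
  (hXZ.prodMk hYW hXY hZW).comp measurable_add

theorem identDistrib_neg_finsetSum {Xs : ℕ → Ω → ℝ}
    (hXs : ∀ n, Measurable (Xs n)) (hindep : iIndepFun Xs μ)
    (hsymm : ∀ n, IdentDistrib (Xs n) (-Xs n) μ μ) (s : Finset ℕ) :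
    IdentDistrib (∑ i ∈ s, Xs i) (-∑ i ∈ s, Xs i) μ μ := by
  have := hindep.isProbabilityMeasure
  induction s using Finset.induction with
  | empty =>
    rw [sum_empty, neg_zero]
    exact IdentDistrib.refl aemeasurable_const
  | @insert a s ha ih =>
    have hind := hindep.indepFun_finsetSum_of_notMem hXs ha
    rw [sum_insert ha, add_comm, neg_add]
    exact ih.add_of_indepFun (hsymm a) hind (hind.comp measurable_neg measurable_neg)

-- `2|S| ≤ |S + D| + |S - D|`, and `S - D` has the law of `S + D`.
theorem measure_le_abs_le_two_mul_measure_le_abs_add [IsFiniteMeasure μ] {S D : Ω → ℝ}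
    (hS : Measurable S) (hind : IndepFun S D μ) (hD : IdentDistrib D (-D) μ μ) (t : ℝ) :
    μ {ω | t ≤ |S ω|} ≤ 2 * μ {ω | t ≤ |(S + D) ω|} := by
  have hlaw : IdentDistrib (S + D) (S + -D) μ μ :=
    (IdentDistrib.refl hS.aemeasurable).add_of_indepFun hD hind
      (hind.comp measurable_id measurable_neg)
  have hmeas : MeasurableSet {x : ℝ | t ≤ |x|} :=
    measurableSet_le measurable_const measurable_abs
  have hsub : {ω | t ≤ |S ω|} ⊆
      (S + D) ⁻¹' {x | t ≤ |x|} ∪ (S + -D) ⁻¹' {x | t ≤ |x|} := by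
    intro ω hω
    by_contra h
    simp only [Set.mem_union, Set.mem_preimage, Set.mem_ofPred_eq, Pi.add_apply, Pi.neg_apply,
      not_or, not_le] at h hω
    have := abs_add_le (S ω + D ω) (S ω + -D ω)
    rw [show S ω + D ω + (S ω + -D ω) = 2 * S ω by ring, abs_mul, abs_two] at this
    linarith
  calc μ {ω | t ≤ |S ω|}
      ≤ μ ((S + D) ⁻¹' {x | t ≤ |x|}) + μ ((S + -D) ⁻¹' {x | t ≤ |x|}) :=
        (measure_mono hsub).trans (measure_union_le _ _)
    _ = 2 * μ {ω | t ≤ |(S + D) ω|} := by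
        rw [← hlaw.measure_mem_eq hmeas, two_mul]; rfl

theorem measure_le_abs_partialSum_le_two_mul {Xs : ℕ → Ω → ℝ}
    (hXs : ∀ n, Measurable (Xs n)) (hindep : iIndepFun Xs μ)
    (hsymm : ∀ n, IdentDistrib (Xs n) (-Xs n) μ μ) {m n : ℕ} (hmn : m ≤ n) (t : ℝ) :
    μ {ω | t ≤ |partialSum Xs m ω|} ≤ 2 * μ {ω | t ≤ |partialSum Xs n ω|} := by
  have := hindep.isProbabilityMeasure
  have hsum (k : ℕ) : partialSum Xs k = ∑ i ∈ range k, Xs i :=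
    funext fun ω => (Finset.sum_apply ω _ _).symm
  have hdisj : Disjoint (range m) (Ico m n) := by
    rw [range_eq_Ico]; exact Ico_disjoint_Ico_consecutive 0 m n
  have key := measure_le_abs_le_two_mul_measure_le_abs_add (by fun_prop)
    (hindep.indepFun_finsetSum_finsetSum hXs hdisj)
    (identDistrib_neg_finsetSum hXs hindep hsymm _) t
  simpa only [sum_range_add_sum_Ico _ hmn, hsum] using key

end Symmetry

theorem tsum_sum_Ico_two_pow_le (g : ℕ → ℝ≥0∞) :
    ∑' i, ∑ n ∈ Ico (2 ^ i) (2 ^ (i + 1)), g n ≤ ∑' n : {n : ℕ // 1 ≤ n}, g n := by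
  refine ENNReal.tsum_le_of_sum_range_le fun k => ?_
  have hblocks : ∑ i ∈ range k, ∑ n ∈ Ico (2 ^ i) (2 ^ (i + 1)), g n
      = ∑ n ∈ Ico 1 (2 ^ k), g n := by
    induction k with
    | zero => simp
    | succ k ih =>
      rw [sum_range_succ, ih, sum_Ico_consecutive _ k.one_le_two_pow
        (Nat.pow_le_pow_right two_pos k.le_succ)]
  rw [hblocks, ← sum_subtype_of_mem g (p := (1 ≤ ·)) fun n hn => (mem_Ico.1 hn).1]
  exact ENNReal.sum_le_tsum _

theorem ENNReal.inv_le_two_mul_inv {a b : ℝ≥0∞} (hba : b ≤ 2 * a) : a⁻¹ ≤ 2 * b⁻¹ :=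
  calc a⁻¹ = 2 * (2 * a)⁻¹ := by
        rw [ENNReal.mul_inv (by simp) (by simp), ← mul_assoc,
          ENNReal.mul_inv_cancel two_ne_zero ENNReal.ofNat_ne_top, one_mul]
    _ ≤ 2 * b⁻¹ := by gcongr

section Summands

variable {Ω : Type*} [MeasurableSpace Ω] {μ : Measure Ω} {Xs : ℕ → Ω → ℝ} {G : ℝ → ℝ}

theorem inv_mul_ofReal_mul_measure_le
    (hXs : ∀ n, Measurable (Xs n)) (hindep : iIndepFun Xs μ)
    (hsymm : ∀ n, IdentDistrib (Xs n) (-Xs n) μ μ) (hGmono : MonotoneOn G (Set.Ici 0))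
    {m n : ℕ} (hmn : m ≤ n) (hn : n ≤ 2 * m) :
    (m : ℝ≥0∞)⁻¹ * (ENNReal.ofReal (G m) * μ {ω | (m : ℝ) / 4 ≤ |partialSum Xs m ω|}) ≤
      4 * ((n : ℝ≥0∞)⁻¹ * ENNReal.ofReal (G n) *
        μ {ω | (n : ℝ) / 8 ≤ |partialSum Xs n ω|}) := by
  have hG : ENNReal.ofReal (G m) ≤ ENNReal.ofReal (G n) :=
    ENNReal.ofReal_le_ofReal <|
      hGmono (Set.mem_Ici.2 m.cast_nonneg) (Set.mem_Ici.2 n.cast_nonneg) (mod_cast hmn)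
  have hthreshold : (n : ℝ) / 8 ≤ m / 4 := by
    have : (n : ℝ) ≤ 2 * m := mod_cast hn
    linarith
  have hμ : μ {ω | (m : ℝ) / 4 ≤ |partialSum Xs m ω|} ≤
      2 * μ {ω | (n : ℝ) / 8 ≤ |partialSum Xs n ω|} :=
    (measure_le_abs_partialSum_le_two_mul hXs hindep hsymm hmn _).trans <|
      mul_le_mul_right (measure_mono fun _ => hthreshold.trans) 2
  calc (m : ℝ≥0∞)⁻¹ * (ENNReal.ofReal (G m) * μ {ω | (m : ℝ) / 4 ≤ |partialSum Xs m ω|})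
      ≤ 2 * (n : ℝ≥0∞)⁻¹ *
          (ENNReal.ofReal (G n) * (2 * μ {ω | (n : ℝ) / 8 ≤ |partialSum Xs n ω|})) := by
        gcongr
        exact ENNReal.inv_le_two_mul_inv (mod_cast hn)
    _ = 4 * ((n : ℝ≥0∞)⁻¹ * ENNReal.ofReal (G n) *
          μ {ω | (n : ℝ) / 8 ≤ |partialSum Xs n ω|}) := by ring

theorem ofReal_mul_measure_le_four_mul_sum_Ico
    (hXs : ∀ n, Measurable (Xs n)) (hindep : iIndepFun Xs μ)
    (hsymm : ∀ n, IdentDistrib (Xs n) (-Xs n) μ μ) (hGmono : MonotoneOn G (Set.Ici 0))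
    {m : ℕ} (hm : 0 < m) :
    ENNReal.ofReal (G m) * μ {ω | (m : ℝ) / 4 ≤ |partialSum Xs m ω|} ≤
      4 * ∑ n ∈ Ico m (2 * m), (n : ℝ≥0∞)⁻¹ * ENNReal.ofReal (G n) *
        μ {ω | (n : ℝ) / 8 ≤ |partialSum Xs n ω|} := by
  set a := ENNReal.ofReal (G m) * μ {ω | (m : ℝ) / 4 ≤ |partialSum Xs m ω|}
  have hcard : (Ico m (2 * m)).card = m := by rw [Nat.card_Ico]; omega
  calc a = ∑ n ∈ Ico m (2 * m), (m : ℝ≥0∞)⁻¹ * a := by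
        rw [sum_const, hcard, nsmul_eq_mul, ← mul_assoc,
          ENNReal.mul_inv_cancel (mod_cast hm.ne') (ENNReal.natCast_ne_top m), one_mul]
    _ ≤ ∑ n ∈ Ico m (2 * m), 4 * ((n : ℝ≥0∞)⁻¹ * ENNReal.ofReal (G n) *
          μ {ω | (n : ℝ) / 8 ≤ |partialSum Xs n ω|}) := by
        refine sum_le_sum fun n hn => ?_
        obtain ⟨hmn, hn⟩ := mem_Ico.1 hn
        exact inv_mul_ofReal_mul_measure_le hXs hindep hsymm hGmono hmn hn.le
    _ = _ := (mul_sum _ _ _).symm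

end Summands

theorem stmt15_general {Ω : Type*} [MeasurableSpace Ω] (μ : Measure Ω)
    (X : Ω → ℝ) (Xs : ℕ → Ω → ℝ)
    (hXs : ∀ n, Measurable (Xs n))
    (hindep : iIndepFun Xs μ)
    (hident : ∀ n, IdentDistrib (Xs n) X μ μ)
    (hsymm : Measure.map X μ = Measure.map (fun ω => -X ω) μ)
    (G : ℝ → ℝ) (hGmono : MonotoneOn G (Set.Ici 0)) :
    ∑' i : ℕ, ENNReal.ofReal (G ((2 : ℕ) ^ i)) *
        μ {ω | ((2 : ℝ) ^ i) / 4 ≤ |partialSum Xs (2 ^ i) ω|} ≤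
      4 * ∑' n : {n : ℕ // 1 ≤ n}, ((n : ℕ) : ℝ≥0∞)⁻¹ * ENNReal.ofReal (G (n : ℕ)) *
        μ {ω | ((n : ℕ) : ℝ) / 8 ≤ |partialSum Xs (n : ℕ) ω|} := by
  have hsymmXs (n : ℕ) : IdentDistrib (Xs n) (-Xs n) μ μ :=
    ⟨(hXs n).aemeasurable, (hXs n).neg.aemeasurable, by
      rw [(hident n).map_eq, hsymm]; exact ((hident n).comp measurable_neg).map_eq.symm⟩
  calc ∑' i : ℕ, ENNReal.ofReal (G ((2 : ℕ) ^ i)) *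
        μ {ω | ((2 : ℝ) ^ i) / 4 ≤ |partialSum Xs (2 ^ i) ω|}
      ≤ ∑' i : ℕ, 4 * ∑ n ∈ Ico (2 ^ i : ℕ) (2 ^ (i + 1)),
          (n : ℝ≥0∞)⁻¹ * ENNReal.ofReal (G n) * μ {ω | (n : ℝ) / 8 ≤ |partialSum Xs n ω|} := by
        refine ENNReal.tsum_le_tsum fun i => ?_
        have := ofReal_mul_measure_le_four_mul_sum_Ico hXs hindep hsymmXs hGmono
          (pow_pos two_pos i)
        rw [pow_succ']
        push_cast at this ⊢
        exact this
    _ ≤ _ := by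
        rw [ENNReal.tsum_mul_left]
        gcongr
        exact tsum_sum_Ico_two_pow_le _

theorem stmt15 {Ω : Type*} [MeasurableSpace Ω] (μ : Measure Ω) [IsProbabilityMeasure μ]
    (X : Ω → ℝ) (Xs : ℕ → Ω → ℝ)
    (hX : Measurable X) (hXs : ∀ n, Measurable (Xs n))
    (hindep : iIndepFun Xs μ)
    (hident : ∀ n, IdentDistrib (Xs n) X μ μ)
    (hsymm : Measure.map X μ = Measure.map (fun ω => -X ω) μ)
    (G : ℝ → ℝ) (hGpos : ∀ t ≥ 0, 0 < G t) (hGmono : MonotoneOn G (Set.Ici 0)) :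
    ∑' i : ℕ, ENNReal.ofReal (G ((2 : ℕ) ^ i)) *
        μ {ω | ((2 : ℝ) ^ i) / 4 ≤ |partialSum Xs (2 ^ i) ω|} ≤
      4 * ∑' n : {n : ℕ // 1 ≤ n}, ((n : ℕ) : ℝ≥0∞)⁻¹ * ENNReal.ofReal (G (n : ℕ)) *
        μ {ω | ((n : ℕ) : ℝ) / 8 ≤ |partialSum Xs (n : ℕ) ω|} :=
  stmt15_general μ X Xs hXs hindep hident hsymm G hGmono
end

section
/- Let (X_n)_{n≥1} be i.i.d. real random variables, let (X'_n) be an independent copy of the sequence (X_n), and set X*_n := X_n − X'_n. Let L_a, L'_a and L*_a denote the last deviation times associated with the Cesàro means of (X_n), (X'_n) and (X*_n) respectively. Then for every a > 0 and every n ≥ 1, {L*_{2a} ≥ n} ⊆ {L_a ≥ n} ∪ {L'_a ≥ n}, so P[L*_{2a} ≥ n] ≤ 2·P[L_a ≥ n]; consequently, for every nonnegative non-decreasing function G one has E[G(L*_{2a})] ≤ 2·E[G(L_a)] (both sides possibly infinite). -/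
/-! Since `S*_m = S_m - S'_m`, the triangle inequality turns a deviation `|S*_m / m| ≥ 2a` into
`|S_m / m| ≥ a` or `|S'_m / m| ≥ a`, so `L*_{2a} ≤ max L_a L'_a` pointwise. By independence the
sequences `(X_n)` and `(X'_n)` both have the infinite product law, hence `L'_a` has the law of
`L_a`, and both bounds follow from `max ≤ sum`. -/

open MeasureTheory ProbabilityTheory ENNReal

instance ENat.borelSpace : BorelSpace ℕ∞ :=
  ⟨borel_eq_top_of_countable.symm⟩

section LastDev

variable {Ω : Type*}

lemma partialSum_sub (X Y : ℕ → Ω → ℝ) (n : ℕ) (ω : Ω) :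
    partialSum (fun m ω' => X m ω' - Y m ω') n ω = partialSum X n ω - partialSum Y n ω :=
  Finset.sum_sub_distrib ..

lemma le_lastDev {X : ℕ → Ω → ℝ} {a : ℝ} {ω : Ω} {n : ℕ} (hn : 1 ≤ n)
    (h : a ≤ |partialSum X n ω / n|) : (n : ℕ∞) ≤ lastDev X a ω :=
  le_iSup₂ (f := fun (m : ℕ) (_ : m ∈ {m : ℕ | 1 ≤ m ∧ a ≤ |partialSum X m ω / m|}) => (m : ℕ∞))
    n ⟨hn, h⟩

lemma le_abs_or_le_abs_of_two_mul_le_abs_sub {a x y : ℝ} (h : 2 * a ≤ |x - y|) :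
    a ≤ |x| ∨ a ≤ |y| := by
  by_contra! hxy
  linarith [abs_sub x y]

lemma lastDev_sub_le_max (X Y : ℕ → Ω → ℝ) (a : ℝ) (ω : Ω) :
    lastDev (fun m ω' => X m ω' - Y m ω') (2 * a) ω ≤ max (lastDev X a ω) (lastDev Y a ω) := by
  refine iSup₂_le fun m ⟨hm, hdev⟩ => ?_
  rw [partialSum_sub, sub_div] at hdev
  rcases le_abs_or_le_abs_of_two_mul_le_abs_sub hdev with h | h
  · exact le_max_of_le_left (le_lastDev hm h)
  · exact le_max_of_le_right (le_lastDev hm h)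

lemma measurable_lastDev [MeasurableSpace Ω] {X : ℕ → Ω → ℝ} (hX : ∀ m, Measurable (X m))
    (a : ℝ) : Measurable (lastDev X a) := by
  classical
  refine Measurable.iSup fun n => ?_
  simp only [iSup_eq_if]
  refine Measurable.ite ?_ measurable_const measurable_const
  have hS : Measurable (partialSum X n) := Finset.measurable_sum _ fun i _ => hX i
  exact (MeasurableSet.const _).inter <| measurableSet_le measurable_const (hS.div_const _).abs

end LastDev

lemma IdentDistrib.pi_of_iIndepFun {ι Ω Ω' : Type*} [Countable ι] {E : ι → Type*}
    [∀ i, MeasurableSpace (E i)] [MeasurableSpace Ω] [MeasurableSpace Ω'] {μ : Measure Ω}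
    {ν : Measure Ω'} {f : ∀ i, Ω → E i} {g : ∀ i, Ω' → E i} (hf : iIndepFun f μ)
    (hg : iIndepFun g ν) (hfg : ∀ i, IdentDistrib (f i) (g i) μ ν) :
    IdentDistrib (fun ω i => f i ω) (fun ω i => g i ω) μ ν where
  aemeasurable_fst := aemeasurable_pi_iff.2 fun i => (hfg i).aemeasurable_fst
  aemeasurable_snd := aemeasurable_pi_iff.2 fun i => (hfg i).aemeasurable_snd
  map_eq := by
    rw [hf.map_fun_eq_infinitePi_map₀' fun i => (hfg i).aemeasurable_fst,
      hg.map_fun_eq_infinitePi_map₀' fun i => (hfg i).aemeasurable_snd]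
    simp only [(hfg _).map_eq]

lemma IdentDistrib.lastDev_of_iIndepFun {Ω Ω' : Type*} [MeasurableSpace Ω] [MeasurableSpace Ω']
    {μ : Measure Ω} {ν : Measure Ω'} {X : ℕ → Ω → ℝ} {Y : ℕ → Ω' → ℝ} (hX : iIndepFun X μ)
    (hY : iIndepFun Y ν) (hXY : ∀ m, IdentDistrib (X m) (Y m) μ ν) (a : ℝ) :
    IdentDistrib (lastDev X a) (lastDev Y a) μ ν :=
  (IdentDistrib.pi_of_iIndepFun hX hY hXY).comp (measurable_lastDev measurable_pi_apply a)

lemma evalG_monotone {G : ℝ → ℝ} (hG : MonotoneOn G (Set.Ici 0)) : Monotone (evalG G) := by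
  intro x y hxy
  induction y with
  | top => exact le_top
  | coe n =>
    lift x to ℕ using ne_top_of_le_ne_top (ENat.natCast_ne_top n) hxy
    exact ENNReal.ofReal_le_ofReal <|
      hG (Set.mem_Ici.2 x.cast_nonneg) (Set.mem_Ici.2 n.cast_nonneg) (by exact_mod_cast hxy)

section Comparison

variable {Ω α : Type*} [LinearOrder α] {f g g' : Ω → α}

lemma setOf_le_subset_union_of_le_max (h : ∀ ω, f ω ≤ max (g ω) (g' ω)) (n : α) :
    {ω | n ≤ f ω} ⊆ {ω | n ≤ g ω} ∪ {ω | n ≤ g' ω} :=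
  fun ω hω => le_max_iff.1 (hω.trans (h ω))

variable [MeasurableSpace Ω] {μ : Measure Ω} [MeasurableSpace α]

lemma measure_setOf_le_le_two_mul [TopologicalSpace α] [OrderClosedTopology α]
    [OpensMeasurableSpace α] (h : ∀ ω, f ω ≤ max (g ω) (g' ω)) (hg : IdentDistrib g' g μ μ)
    (n : α) : μ {ω | n ≤ f ω} ≤ 2 * μ {ω | n ≤ g ω} :=
  calc μ {ω | n ≤ f ω} ≤ μ {ω | n ≤ g ω} + μ {ω | n ≤ g' ω} :=
        (measure_mono (setOf_le_subset_union_of_le_max h n)).trans (measure_union_le _ _)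
    _ = 2 * μ {ω | n ≤ g ω} := by
      rw [two_mul]; exact congrArg _ (hg.measure_mem_eq measurableSet_Ici)

lemma lintegral_comp_le_two_mul {φ : α → ℝ≥0∞} (hφ : Monotone φ) (hφm : Measurable φ)
    (h : ∀ ω, f ω ≤ max (g ω) (g' ω)) (hg : IdentDistrib g' g μ μ) :
    ∫⁻ ω, φ (f ω) ∂μ ≤ 2 * ∫⁻ ω, φ (g ω) ∂μ :=
  calc ∫⁻ ω, φ (f ω) ∂μ ≤ ∫⁻ ω, φ (g ω) + φ (g' ω) ∂μ :=
        lintegral_mono fun ω => (hφ (h ω)).trans <| by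
          rw [hφ.map_max]; exact max_le le_self_add le_add_self
    _ = ∫⁻ ω, φ (g ω) ∂μ + ∫⁻ ω, φ (g' ω) ∂μ :=
        lintegral_add_left' (hg.comp hφm).aemeasurable_snd _
    _ = 2 * ∫⁻ ω, φ (g ω) ∂μ := by
      rw [two_mul]; exact congrArg _ (hg.comp hφm).lintegral_eq

end Comparison

/-- `Z (n, false)` plays the role of `X_n` and `Z (n, true)` that of `X'_n`, an independent
copy of the sequence. -/
theorem stmt18_general {Ω : Type*} [MeasurableSpace Ω] (μ : Measure Ω)
    (X : Ω → ℝ) (Z : ℕ × Bool → Ω → ℝ)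
    (hindep : iIndepFun Z μ)
    (hident : ∀ p, IdentDistrib (Z p) X μ μ) :
    ∀ a > (0 : ℝ), ∀ n : ℕ, 1 ≤ n →
      {ω | (n : ℕ∞) ≤ lastDev (fun m ω' => Z (m, false) ω' - Z (m, true) ω') (2 * a) ω} ⊆
        {ω | (n : ℕ∞) ≤ lastDev (fun m => Z (m, false)) a ω} ∪
          {ω | (n : ℕ∞) ≤ lastDev (fun m => Z (m, true)) a ω} ∧
      μ {ω | (n : ℕ∞) ≤ lastDev (fun m ω' => Z (m, false) ω' - Z (m, true) ω') (2 * a) ω} ≤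
        2 * μ {ω | (n : ℕ∞) ≤ lastDev (fun m => Z (m, false)) a ω} ∧
      ∀ G : ℝ → ℝ, (∀ t ≥ 0, 0 ≤ G t) → MonotoneOn G (Set.Ici 0) →
        ∫⁻ ω, evalG G (lastDev (fun m ω' => Z (m, false) ω' - Z (m, true) ω') (2 * a) ω) ∂μ ≤
          2 * ∫⁻ ω, evalG G (lastDev (fun m => Z (m, false)) a ω) ∂μ := by
  intro a _ n _
  have hmax : ∀ ω, lastDev (fun m ω' => Z (m, false) ω' - Z (m, true) ω') (2 * a) ω ≤
      max (lastDev (fun m => Z (m, false)) a ω) (lastDev (fun m => Z (m, true)) a ω) :=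
    lastDev_sub_le_max _ _ a
  have hcopy : IdentDistrib (lastDev (fun m => Z (m, true)) a)
      (lastDev (fun m => Z (m, false)) a) μ μ :=
    IdentDistrib.lastDev_of_iIndepFun (hindep.precomp (Prod.mk_left_injective true))
      (hindep.precomp (Prod.mk_left_injective false)) (fun m => (hident _).trans (hident _).symm) a
  exact ⟨setOf_le_subset_union_of_le_max hmax n, measure_setOf_le_le_two_mul hmax hcopy n,
    fun G _ hG =>
      lintegral_comp_le_two_mul (evalG_monotone hG) (measurable_of_countable _) hmax hcopy⟩

/-- `Z (n, false)` plays the role of `X_n` and `Z (n, true)` that of `X'_n`, an independent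
copy of the sequence; `X*_n := X_n − X'_n`.  `L_a`, `L'_a`, `L*_a` are the last deviation
times of the corresponding Cesàro means. -/
theorem stmt18 {Ω : Type*} [MeasurableSpace Ω] (μ : Measure Ω) [IsProbabilityMeasure μ]
    (X : Ω → ℝ) (Z : ℕ × Bool → Ω → ℝ)
    (hX : Measurable X) (hZ : ∀ p, Measurable (Z p))
    (hindep : iIndepFun Z μ)
    (hident : ∀ p, IdentDistrib (Z p) X μ μ) :
    ∀ a > (0 : ℝ), ∀ n : ℕ, 1 ≤ n →
      {ω | (n : ℕ∞) ≤ lastDev (fun m ω' => Z (m, false) ω' - Z (m, true) ω') (2 * a) ω} ⊆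
        {ω | (n : ℕ∞) ≤ lastDev (fun m => Z (m, false)) a ω} ∪
          {ω | (n : ℕ∞) ≤ lastDev (fun m => Z (m, true)) a ω} ∧
      μ {ω | (n : ℕ∞) ≤ lastDev (fun m ω' => Z (m, false) ω' - Z (m, true) ω') (2 * a) ω} ≤
        2 * μ {ω | (n : ℕ∞) ≤ lastDev (fun m => Z (m, false)) a ω} ∧
      ∀ G : ℝ → ℝ, (∀ t ≥ 0, 0 ≤ G t) → MonotoneOn G (Set.Ici 0) →
        ∫⁻ ω, evalG G (lastDev (fun m ω' => Z (m, false) ω' - Z (m, true) ω') (2 * a) ω) ∂μ ≤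
          2 * ∫⁻ ω, evalG G (lastDev (fun m => Z (m, false)) a ω) ∂μ :=
  stmt18_general μ X Z hindep hident
end
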